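/- Let K = ℚ(√5). On the elliptic curve over K defined by y² = x³ + (281880√5 − 630315)x + 328392630 − 146861640√5, the point (264√5 − 585, 5076√5 − 11340) is a torsion point of order 15. -/

import Mathlib

/-!
With `s = √5`, the chord-and-tangent formulas give `2P`, `4P = 2(2P)` and `5P = 4P + P` as affine
points, and the tangent at `5P` yields `2(5P) = -(5P)`, so `15P = 0`. Moreover `3P = 2P + P` is
affine because `2P` and `P` have different `x`-coordinates, and `5P` is affine, so the order of
`P` is `3 · 5`. Every required inequality `a + b√5 ≠ 0` comes from `a² ≠ 5b²`.
-/

theorem addOrderOf_eq_mul_of_prime {G : Type*} [AddMonoid G] {a : G} {p q : ℕ}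
    (hp : p.Prime) (hq : q.Prime) (hpq : (p * q) • a = 0) (hpa : p • a ≠ 0) (hqa : q • a ≠ 0) :
    addOrderOf a = p * q := by
  obtain ⟨d, e, hd, he, hde⟩ := Nat.dvd_mul.mp (addOrderOf_dvd_of_nsmul_eq_zero hpq)
  rcases (Nat.dvd_prime hp).mp hd with rfl | rfl
  · exact absurd (addOrderOf_dvd_iff_nsmul_eq_zero.mp (by simp [← hde, he])) hqa
  rcases (Nat.dvd_prime hq).mp he with rfl | rfl
  · exact absurd (addOrderOf_dvd_iff_nsmul_eq_zero.mp (by simp [← hde])) hpa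
  exact hde.symm

theorem ne_of_sub_eq_add_mul {R : Type*} [CommRing R] {s d x y a b : R} (hs : s ^ 2 = d)
    (hxy : x - y = a + b * s) (hab : a ^ 2 ≠ d * b ^ 2) : x ≠ y := by
  rintro rfl
  exact hab (by linear_combination (b * s - a) * hxy + b ^ 2 * hs)

namespace WeierstrassCurve.Affine

variable {F : Type*} [Field F] {W : Affine F}

section IsShortNF

variable [W.IsShortNF]

theorem negY_of_isShortNF (x y : F) : W.negY x y = -y := by
  simp only [negY, a₁_of_isShortNF, a₃_of_isShortNF]
  ring

theorem nonsingular_of_isShortNF {x y : F} (h : y ^ 2 = x ^ 3 + W.a₄ * x + W.a₆) (hy : y ≠ -y) :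
    W.Nonsingular x y := by
  rw [nonsingular_iff, equation_iff, a₁_of_isShortNF, a₂_of_isShortNF, a₃_of_isShortNF]
  exact ⟨by linear_combination h, Or.inr (by simpa using hy)⟩

end IsShortNF

namespace Point

variable [DecidableEq F] {x₁ y₁ x₂ y₂ x₃ y₃ ℓ : F}

theorem exists_some_add_some_eq (h₁ : W.Nonsingular x₁ y₁) (h₂ : W.Nonsingular x₂ y₂)
    (hxy : ¬(x₁ = x₂ ∧ y₁ = W.negY x₂ y₂)) (hx₃ : W.addX x₁ x₂ (W.slope x₁ x₂ y₁ y₂) = x₃)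
    (hy₃ : W.addY x₁ x₂ y₁ (W.slope x₁ x₂ y₁ y₂) = y₃) :
    ∃ h₃ : W.Nonsingular x₃ y₃, some _ _ h₁ + some _ _ h₂ = some _ _ h₃ := by
  subst hx₃ hy₃
  exact ⟨nonsingular_add h₁ h₂ hxy, add_some hxy⟩

variable [W.IsShortNF]

theorem exists_some_add_some_of_X_ne (h₁ : W.Nonsingular x₁ y₁) (h₂ : W.Nonsingular x₂ y₂)
    (hx : x₁ ≠ x₂) (hℓ : ℓ * (x₁ - x₂) = y₁ - y₂) (hx₃ : ℓ ^ 2 - x₁ - x₂ = x₃)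
    (hy₃ : ℓ * (x₁ - x₃) - y₁ = y₃) :
    ∃ h₃ : W.Nonsingular x₃ y₃, some _ _ h₁ + some _ _ h₂ = some _ _ h₃ := by
  have hslope : W.slope x₁ x₂ y₁ y₂ = ℓ := by
    rw [slope_of_X_ne hx, div_eq_iff (sub_ne_zero.mpr hx), hℓ]
  refine exists_some_add_some_eq h₁ h₂ (fun h => hx h.1) ?_ ?_
  · simp only [addX, hslope, a₁_of_isShortNF, a₂_of_isShortNF]
    linear_combination hx₃
  · simp only [addY, negAddY, addX, negY_of_isShortNF, hslope, a₁_of_isShortNF,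
      a₂_of_isShortNF]
    linear_combination hy₃ - ℓ * hx₃

theorem exists_two_nsmul_some (h₁ : W.Nonsingular x₁ y₁) (hy : y₁ ≠ -y₁)
    (hℓ : ℓ * (2 * y₁) = 3 * x₁ ^ 2 + W.a₄) (hx₃ : ℓ ^ 2 - 2 * x₁ = x₃)
    (hy₃ : ℓ * (x₁ - x₃) - y₁ = y₃) :
    ∃ h₃ : W.Nonsingular x₃ y₃, 2 • some _ _ h₁ = some _ _ h₃ := by
  have hy' : y₁ ≠ W.negY x₁ y₁ := by rwa [negY_of_isShortNF]
  have hslope : W.slope x₁ x₁ y₁ y₁ = ℓ := by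
    rw [slope_of_Y_ne rfl hy', div_eq_iff (sub_ne_zero.mpr hy'), negY_of_isShortNF,
      a₁_of_isShortNF, a₂_of_isShortNF]
    linear_combination -hℓ
  rw [two_nsmul]
  refine exists_some_add_some_eq h₁ h₁ (fun h => hy' h.2) ?_ ?_
  · simp only [addX, hslope, a₁_of_isShortNF, a₂_of_isShortNF]
    linear_combination hx₃
  · simp only [addY, negAddY, addX, negY_of_isShortNF, hslope, a₁_of_isShortNF,
      a₂_of_isShortNF]
    linear_combination hy₃ - ℓ * hx₃

end Point

end WeierstrassCurve.Affine

open WeierstrassCurve.Affine Point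

section SqrtFive

variable {K : Type*} [Field K] [CharZero K] {s : K}

def sqrtFiveCurve (s : K) : WeierstrassCurve.Affine K :=
  ⟨0, 0, 0, 281880 * s - 630315, 328392630 - 146861640 * s⟩

instance : (sqrtFiveCurve s).IsShortNF := ⟨rfl, rfl, rfl⟩

variable (hs : s ^ 2 = 5)
include hs

theorem sqrtFiveCurve_nonsingular :
    (sqrtFiveCurve s).Nonsingular (264 * s - 585) (5076 * s - 11340) :=
  nonsingular_of_isShortNF
    (by simp only [sqrtFiveCurve]; linear_combination (73665936 - 18399744 * s) * hs)
    (ne_of_sub_eq_add_mul hs (a := -22680) (b := 10152) (by ring) (by norm_num))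

variable [DecidableEq K] (h₁ : (sqrtFiveCurve s).Nonsingular (264 * s - 585) (5076 * s - 11340))

theorem sqrtFiveCurve_two_nsmul :
    ∃ h₂ : (sqrtFiveCurve s).Nonsingular (3195 - 1428 * s) (251640 - 112536 * s),
      2 • some _ _ h₁ = some _ _ h₂ :=
  exists_two_nsmul_some h₁ (ℓ := 15 * s - 30)
    (ne_of_sub_eq_add_mul hs (a := -22680) (b := 10152) (by ring) (by norm_num))
    (by simp only [sqrtFiveCurve]; linear_combination -56808 * hs)
    (by linear_combination 225 * hs) (by linear_combination 25380 * hs)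

theorem sqrtFiveCurve_three_nsmul_ne_zero : 3 • some _ _ h₁ ≠ 0 := by
  obtain ⟨h₂, hP₂⟩ := sqrtFiveCurve_two_nsmul hs h₁
  have hx : (3195 - 1428 * s : K) ≠ 264 * s - 585 :=
    ne_of_sub_eq_add_mul hs (a := 3780) (b := -1692) (by ring) (by norm_num)
  rw [succ_nsmul, hP₂, add_some fun h => hx h.1]
  exact some_ne_zero _

theorem sqrtFiveCurve_five_nsmul :
    ∃ h₅ : (sqrtFiveCurve s).Nonsingular (135 - 60 * s) (4104 * s - 9180),
      5 • some _ _ h₁ = some _ _ h₅ := by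
  obtain ⟨h₂, hP₂⟩ := sqrtFiveCurve_two_nsmul hs h₁
  obtain ⟨h₄, hP₄⟩ : ∃ h₄ : (sqrtFiveCurve s).Nonsingular (855 - 384 * s) (29700 - 13284 * s),
      2 • some _ _ h₂ = some _ _ h₄ :=
    exists_two_nsmul_some h₂ (ℓ := 60 - 27 * s)
      (ne_of_sub_eq_add_mul hs (a := 503280) (b := -225072) (by ring) (by norm_num))
      (by simp only [sqrtFiveCurve]; linear_combination -40608 * hs)
      (by linear_combination 729 * hs) (by linear_combination 28188 * hs)
  obtain ⟨h₅, hP₅⟩ := exists_some_add_some_of_X_ne h₄ h₁ (ℓ := 15 - 6 * s)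
    (x₃ := 135 - 60 * s) (y₃ := 4104 * s - 9180)
    (ne_of_sub_eq_add_mul hs (a := 1440) (b := -648) (by ring) (by norm_num))
    (by linear_combination 3888 * hs) (by linear_combination 36 * hs)
    (by linear_combination 1944 * hs)
  refine ⟨h₅, ?_⟩
  rw [show 5 = 2 * 2 + 1 from rfl, add_nsmul, mul_nsmul', hP₂, hP₄, one_nsmul, hP₅]

theorem sqrtFiveCurve_fifteen_nsmul : 15 • some _ _ h₁ = 0 := by
  obtain ⟨h₅, hP₅⟩ := sqrtFiveCurve_five_nsmul hs h₁
  obtain ⟨h₁₀, hP₁₀⟩ : ∃ h₁₀ : (sqrtFiveCurve s).Nonsingular (135 - 60 * s) (9180 - 4104 * s),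
      2 • some _ _ h₅ = some _ _ h₁₀ :=
    exists_two_nsmul_some h₅ (ℓ := 15 - 6 * s)
      (ne_of_sub_eq_add_mul hs (a := -18360) (b := 8208) (by ring) (by norm_num))
      (by simp only [sqrtFiveCurve]; linear_combination -60048 * hs)
      (by linear_combination 36 * hs) (by ring)
  rw [show 15 = 3 * 5 from rfl, mul_nsmul', hP₅, succ_nsmul, hP₁₀]
  exact add_of_Y_eq rfl (by rw [negY_of_isShortNF]; ring)

end SqrtFive

open Classical in
theorem stmt_6_general {K : Type*} [Field K] [Algebra ℚ K] (s : K) (hs : s ^ 2 = 5) :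
    ∃ h : WeierstrassCurve.Affine.Nonsingular (⟨0, 0, 0, 281880 * s - 630315, 328392630 - 146861640 * s⟩ : WeierstrassCurve.Affine K) (264 * s - 585) (5076 * s - 11340),
      addOrderOf (WeierstrassCurve.Affine.Point.some _ _ h) = 15 := by
  have : CharZero K := charZero_of_injective_algebraMap (algebraMap ℚ K).injective
  have h₁ := sqrtFiveCurve_nonsingular hs
  obtain ⟨h₅, hP₅⟩ := sqrtFiveCurve_five_nsmul hs h₁
  exact ⟨h₁, addOrderOf_eq_mul_of_prime Nat.prime_three Nat.prime_five
    (sqrtFiveCurve_fifteen_nsmul hs h₁) (sqrtFiveCurve_three_nsmul_ne_zero hs h₁)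
    (hP₅ ▸ some_ne_zero h₅)⟩

open Classical in
/-- K = ℚ(√(5)); the given point is a torsion point of order 15. -/
theorem stmt_6 {K : Type*} [Field K] [Algebra ℚ K] (s : K) (hs : s ^ 2 = 5)
    (hK : ∀ x : K, ∃ a b : ℚ, x = algebraMap ℚ K a + algebraMap ℚ K b * s) :
    ∃ h : WeierstrassCurve.Affine.Nonsingular (⟨0, 0, 0, 281880 * s - 630315, 328392630 - 146861640 * s⟩ : WeierstrassCurve.Affine K) (264 * s - 585) (5076 * s - 11340),
      addOrderOf (WeierstrassCurve.Affine.Point.some _ _ h) = 15 :=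
  stmt_6_general s hs
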